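/- Let M_0, M_1, M_2 be the second-order differential operators on ℚ[q_1, q_2, …] defined by M_a = (1/2) Σ_{i+j≥a, i,j≥1} q_i q_j (i+j-a) ∂/∂q_{i+j-a} + (1/2) Σ_{i,j≥1} q_{i+j+a} i j ∂²/(∂q_i ∂q_j) for a = 0, 1, 2, and let Λ_1 = Σ_{i≥2} (i-1) q_i ∂/∂q_{i-1}. Then [M_0, Λ_1] = 2 M_1 as operators on polynomials. -/

import Mathlib

/-!
`Λ₁` is the derivation sending `q_j` to `j q_{j+1}`, and `[∂_m, Λ₁] = (m - 1) ∂_{m-1}`. Hence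
commuting `Λ₁` past a term `c ∂_m` of `M₀` leaves `(m - 1) c ∂_{m-1} - Λ₁(c) ∂_m`, and similarly
for a term `c ∂_i ∂_j`, where both derivative indices get lowered in turn. On a fixed polynomial
all sums are finite; after shifting summation indices so that all terms carry the same monomial,
the coefficient of `q_{i+1} q_{j+1} ∂_{i+j+1}` is `(i+j+2)(i+j+1) - i(i+j+1) - j(i+j+1) = 2(i+j+1)`
and that of `q_{i+j+3} ∂_{i+1} ∂_{j+1}` is `(i+1)(j+1)((i+2) + (j+2) - (i+j+2)) = 2(i+1)(j+1)`,
twice the corresponding coefficients of `M₁`.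
-/
open MvPolynomial

/-- Λ₁ = Σ_{i≥2} (i-1) q_i ∂/∂q_{i-1}, reindexed by i = j+1. -/
noncomputable def Lam1 (f : MvPolynomial ℕ ℚ) : MvPolynomial ℕ ℚ :=
  ∑ᶠ j : ℕ, (j : ℚ) • (X (j + 1) * pderiv j f)

/-- M_a = ½ Σ_{i,j≥1, i+j-a≥1} (i+j-a) q_i q_j ∂/∂q_{i+j-a}
        + ½ Σ_{i,j≥1} i j q_{i+j+a} ∂²/∂q_i∂q_j. -/
noncomputable def M (a : ℕ) (f : MvPolynomial ℕ ℚ) : MvPolynomial ℕ ℚ :=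
  (1 / 2 : ℚ) •
    ((∑ᶠ i : ℕ, ∑ᶠ j : ℕ,
        if 1 ≤ i ∧ 1 ≤ j ∧ 1 ≤ i + j - a then
          ((i + j - a : ℕ) : ℚ) • (X i * X j * pderiv (i + j - a) f)
        else 0) +
      (∑ᶠ i : ℕ, ∑ᶠ j : ℕ,
        ((i : ℚ) * (j : ℚ)) • (X (i + j + a) * pderiv i (pderiv j f))))

open Finset

section Pderiv

theorem pderiv_pderiv_comm {R σ : Type*} [CommRing R] (i j : σ) (f : MvPolynomial σ R) :
    pderiv i (pderiv j f) = pderiv j (pderiv i f) := by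
  classical
  have h : ⁅pderiv i, pderiv j⁆ = (0 : Derivation R (MvPolynomial σ R) (MvPolynomial σ R)) :=
    derivation_ext fun k => by
      rw [Derivation.commutator_apply]
      simp [pderiv_X, Pi.single_apply, apply_ite]
  have := congr($h f)
  rwa [Derivation.commutator_apply, Derivation.zero_apply, sub_eq_zero] at this

variable {R σ : Type*} [CommSemiring R]

theorem Derivation.eq_sum_mul_pderiv (D : Derivation R (MvPolynomial σ R) (MvPolynomial σ R))
    {s : Finset σ} {f : MvPolynomial σ R} (hs : f.vars ⊆ s) :
    D f = ∑ i ∈ s, D (X i) * pderiv i f := by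
  classical
  have hsum (g : MvPolynomial σ R) :
      (∑ i ∈ s, D (X i) • pderiv i) g = ∑ i ∈ s, D (X i) * pderiv i g := by
    rw [← Derivation.coeFnAddMonoidHom_apply, map_sum, Finset.sum_apply]
    rfl
  rw [← hsum]
  exact derivation_eq_of_forall_mem_vars fun k hk => by
    simp [hsum, pderiv_X, Pi.single_apply, hs hk]

theorem exists_forall_ge_pderiv_eq_zero (f : MvPolynomial ℕ R) :
    ∃ n, ∀ k, n ≤ k → pderiv k f = 0 := by
  obtain ⟨n, hn⟩ := f.vars.exists_nat_subset_range
  exact ⟨n, fun k hk => pderiv_eq_zero_of_notMem_vars fun h => (mem_range.mp (hn h)).not_ge hk⟩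

end Pderiv

section Sums

variable {β : Type*} [AddCommMonoid β]

theorem Finset.sum_range_succ_eq_of_eq_zero {g : ℕ → β} {K : ℕ} (h0 : g 0 = 0) (hK : g K = 0) :
    ∑ i ∈ range K, g (i + 1) = ∑ i ∈ range K, g i := by
  rw [← add_zero (∑ i ∈ range K, g (i + 1)), ← h0, ← sum_range_succ', sum_range_succ, hK,
    add_zero]

theorem Finset.sum_range_sum_range_add_shift {A ψ χ : ℕ → ℕ → β} {K : ℕ}
    (hψ : ∀ j, ψ 0 j = 0 ∧ ψ K j = 0) (hχ : ∀ i, χ i 0 = 0 ∧ χ i K = 0) :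
    ∑ i ∈ range K, ∑ j ∈ range K, (A i j + ψ (i + 1) j + χ i (j + 1)) =
      ∑ i ∈ range K, ∑ j ∈ range K, (A i j + ψ i j + χ i j) := by
  simp only [sum_add_distrib]
  rw [sum_range_succ_eq_of_eq_zero (g := fun i => ∑ j ∈ range K, ψ i j)
    (sum_eq_zero fun j _ => (hψ j).1) (sum_eq_zero fun j _ => (hψ j).2)]
  congr 1
  exact sum_congr rfl fun i _ => sum_range_succ_eq_of_eq_zero (hχ i).1 (hχ i).2

theorem finsum_eq_sum_range_succ {g : ℕ → β} {K : ℕ} (h0 : g 0 = 0)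
    (hK : ∀ i, K < i → g i = 0) : ∑ᶠ i, g i = ∑ i ∈ range K, g (i + 1) := by
  rw [finsum_eq_sum_of_support_subset g (s := range (K + 1)), sum_range_succ', h0, add_zero]
  intro i hi
  by_contra hK'
  simp only [coe_range, Set.mem_Iio, not_lt] at hK'
  exact hi (hK i (by omega))

theorem finsum_finsum_eq_sum_range_sum_range {φ : ℕ → ℕ → β} {K : ℕ}
    (h0 : ∀ i j, i = 0 ∨ j = 0 → φ i j = 0) (hK : ∀ i j, K < i ∨ K < j → φ i j = 0) :
    ∑ᶠ i, ∑ᶠ j, φ i j = ∑ i ∈ range K, ∑ j ∈ range K, φ (i + 1) (j + 1) := by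
  rw [finsum_congr fun i =>
    finsum_eq_sum_range_succ (h0 i 0 (.inr rfl)) fun j hj => hK i j (.inr hj)]
  exact finsum_eq_sum_range_succ (sum_eq_zero fun j _ => h0 0 _ (.inl rfl))
    fun i hi => sum_eq_zero fun j _ => hK _ _ (.inl hi)

end Sums

section Lam1

noncomputable def lam1 : Derivation ℚ (MvPolynomial ℕ ℚ) (MvPolynomial ℕ ℚ) :=
  mkDerivation ℚ fun j => (j : ℚ) • X (j + 1)

@[simp]
theorem lam1_X (j : ℕ) : lam1 (X j) = (j : ℚ) • X (j + 1) :=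
  mkDerivation_X _ _ _

theorem Lam1_eq_lam1 (f : MvPolynomial ℕ ℚ) : Lam1 f = lam1 f := by
  rw [lam1.eq_sum_mul_pderiv subset_rfl, Lam1, finsum_eq_sum_of_support_subset (s := f.vars)]
  · simp
  · intro j hj
    by_contra hj'
    exact hj (by simp [pderiv_eq_zero_of_notMem_vars hj'])

theorem pderiv_lam1 (m : ℕ) (f : MvPolynomial ℕ ℚ) :
    pderiv m (lam1 f) = lam1 (pderiv m f) + ((m - 1 : ℕ) : ℚ) • pderiv (m - 1) f := by
  have h : ⁅pderiv m, lam1⁆ = ((m - 1 : ℕ) : ℚ) • pderiv (m - 1) :=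
    derivation_ext fun k => by
      rw [Derivation.commutator_apply, Derivation.smul_apply, pderiv_X, lam1_X, Pi.single_apply]
      have hconst : lam1 (if k = m then 1 else 0) = 0 := by split_ifs <;> simp
      rcases eq_or_ne m (k + 1) with rfl | hm
      · simp
      · obtain rfl | hm0 := Nat.eq_zero_or_pos m
        · simp [hconst]
        · simp [hconst, hm, show k ≠ m - 1 by omega]
  have := congr($h f)
  rw [Derivation.commutator_apply, Derivation.smul_apply] at this
  rw [← this]
  abel

theorem pderiv_lam1_eq_zero {n : ℕ} {f : MvPolynomial ℕ ℚ} (hf : ∀ k, n ≤ k → pderiv k f = 0)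
    (k : ℕ) (hk : n + 1 ≤ k) : pderiv k (lam1 f) = 0 := by
  rw [pderiv_lam1, hf k (by omega), hf (k - 1) (by omega), map_zero, smul_zero, add_zero]

theorem mul_pderiv_succ_lam1_sub (p f : MvPolynomial ℕ ℚ) (m : ℕ) :
    p * pderiv (m + 1) (lam1 f) - lam1 (p * pderiv (m + 1) f) =
      (m : ℚ) • (p * pderiv m f) - lam1 p * pderiv (m + 1) f := by
  rw [pderiv_lam1, Derivation.leibniz, Nat.add_sub_cancel, smul_eq_mul, smul_eq_mul, mul_add,
    mul_smul_comm]
  ring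

theorem mul_pderiv_pderiv_succ_lam1_sub (p f : MvPolynomial ℕ ℚ) (i j : ℕ) :
    p * pderiv (i + 1) (pderiv (j + 1) (lam1 f)) - lam1 (p * pderiv (i + 1) (pderiv (j + 1) f)) =
      (j : ℚ) • (p * pderiv (i + 1) (pderiv j f)) + (i : ℚ) • (p * pderiv i (pderiv (j + 1) f)) -
        lam1 p * pderiv (i + 1) (pderiv (j + 1) f) := by
  have h := mul_pderiv_succ_lam1_sub p (pderiv (j + 1) f) i
  rw [pderiv_lam1, Nat.add_sub_cancel, map_add, Derivation.map_smul, mul_add, mul_smul_comm]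
  linear_combination h

end Lam1

section Truncation

-- The two halves of `2 • M a`, truncated to `i, j < K`, with the paper's indices `i, j ≥ 1`
-- written as `i + 1, j + 1`.
noncomputable def firstOrderPart (a K : ℕ) (g : MvPolynomial ℕ ℚ) : MvPolynomial ℕ ℚ :=
  ∑ i ∈ range K, ∑ j ∈ range K,
    ((i + j + 2 - a : ℕ) : ℚ) • (X (i + 1) * X (j + 1) * pderiv (i + j + 2 - a) g)

noncomputable def secondOrderPart (a K : ℕ) (g : MvPolynomial ℕ ℚ) : MvPolynomial ℕ ℚ :=
  ∑ i ∈ range K, ∑ j ∈ range K,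
    ((i + 1 : ℚ) * (j + 1)) • (X (i + j + 2 + a) * pderiv (i + 1) (pderiv (j + 1) g))

theorem M_eq_of_pderiv_eq_zero {a n K : ℕ} {g : MvPolynomial ℕ ℚ}
    (hg : ∀ k, n ≤ k → pderiv k g = 0) (hK : n + a ≤ K) :
    M a g = (1 / 2 : ℚ) • (firstOrderPart a K g + secondOrderPart a K g) := by
  have first : (∑ᶠ i : ℕ, ∑ᶠ j : ℕ, if 1 ≤ i ∧ 1 ≤ j ∧ 1 ≤ i + j - a then
      ((i + j - a : ℕ) : ℚ) • (X i * X j * pderiv (i + j - a) g) else 0) =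
      firstOrderPart a K g := by
    rw [finsum_finsum_eq_sum_range_sum_range]
    · refine sum_congr rfl fun i _ => sum_congr rfl fun j _ => ?_
      rw [show i + 1 + (j + 1) - a = i + j + 2 - a by omega]
      -- the paper's condition `1 ≤ i + j - a` only removes terms whose coefficient is `0`
      split_ifs
      · rfl
      · simp [show i + j + 2 - a = 0 by omega]
    · rintro i j (rfl | rfl) <;> simp
    · intro i j hij
      split_ifs
      · rw [hg _ (by omega), mul_zero, smul_zero]
      · rfl
  have second : (∑ᶠ i : ℕ, ∑ᶠ j : ℕ,
      ((i : ℚ) * (j : ℚ)) • (X (i + j + a) * pderiv i (pderiv j g))) = secondOrderPart a K g := by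
    rw [finsum_finsum_eq_sum_range_sum_range]
    · refine sum_congr rfl fun i _ => sum_congr rfl fun j _ => ?_
      push_cast
      ring_nf
    · rintro i j (rfl | rfl) <;> simp
    · rintro i j (hi | hj)
      · rw [pderiv_pderiv_comm, hg i (by omega), map_zero, mul_zero, smul_zero]
      · rw [hg j (by omega), map_zero, mul_zero, smul_zero]
  rw [M, first, second]

end Truncation

section Commutators

variable {n K : ℕ} {f : MvPolynomial ℕ ℚ}

theorem commutator_firstOrderPart_lam1 (hf : ∀ k, n ≤ k → pderiv k f = 0) (hK : n ≤ K) :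
    firstOrderPart 0 K (lam1 f) - lam1 (firstOrderPart 0 K f) =
      (2 : ℚ) • firstOrderPart 1 K f := by
  set G : ℕ → ℕ → MvPolynomial ℕ ℚ := fun i j => X (i + 1) * X (j + 1) * pderiv (i + j + 1) f
  set ψ : ℕ → ℕ → MvPolynomial ℕ ℚ := fun i j => (-((i + j + 1) * i) : ℚ) • G i j
  set χ : ℕ → ℕ → MvPolynomial ℕ ℚ := fun i j => (-((i + j + 1) * j) : ℚ) • G i j
  have termwise (i j : ℕ) :
      ((i + j + 2 - 0 : ℕ) : ℚ) • (X (i + 1) * X (j + 1) * pderiv (i + j + 2 - 0) (lam1 f)) -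
        lam1 (((i + j + 2 - 0 : ℕ) : ℚ) • (X (i + 1) * X (j + 1) * pderiv (i + j + 2 - 0) f)) =
      ((i + j + 2) * (i + j + 1) : ℚ) • G i j + ψ (i + 1) j + χ i (j + 1) := by
    rw [Derivation.map_smul, ← smul_sub, Nat.sub_zero, mul_pderiv_succ_lam1_sub (m := i + j + 1),
      Derivation.leibniz, lam1_X, lam1_X]
    simp only [G, ψ, χ, smul_eq_mul]
    rw [show i + 1 + j + 1 = i + j + 1 + 1 by ring, show i + (j + 1) + 1 = i + j + 1 + 1 by ring]
    push_cast
    simp only [Algebra.smul_def, map_add, map_mul, map_natCast, map_ofNat, map_neg, map_one]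
    ring
  have hG (i j : ℕ) (h : K ≤ i ∨ K ≤ j) : G i j = 0 := by
    simp only [G, hf (i + j + 1) (by omega), mul_zero]
  calc firstOrderPart 0 K (lam1 f) - lam1 (firstOrderPart 0 K f)
      = ∑ i ∈ range K, ∑ j ∈ range K,
          (((i + j + 2) * (i + j + 1) : ℚ) • G i j + ψ (i + 1) j + χ i (j + 1)) := by
        simp only [firstOrderPart, map_sum, ← sum_sub_distrib, termwise]
    _ = ∑ i ∈ range K, ∑ j ∈ range K,
          (((i + j + 2) * (i + j + 1) : ℚ) • G i j + ψ i j + χ i j) :=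
        sum_range_sum_range_add_shift (fun j => ⟨by simp [ψ], by simp [ψ, hG K j (.inl le_rfl)]⟩)
          (fun i => ⟨by simp [χ], by simp [χ, hG i K (.inr le_rfl)]⟩)
    _ = (2 : ℚ) • firstOrderPart 1 K f := by
        simp only [firstOrderPart, smul_sum]
        refine sum_congr rfl fun i _ => sum_congr rfl fun j _ => ?_
        simp only [G, ψ, χ, show i + j + 2 - 1 = i + j + 1 by omega]
        push_cast
        module

theorem commutator_secondOrderPart_lam1 (hf : ∀ k, n ≤ k → pderiv k f = 0) (hK : n ≤ K) :
    secondOrderPart 0 K (lam1 f) - lam1 (secondOrderPart 0 K f) =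
      (2 : ℚ) • secondOrderPart 1 K f := by
  set H : ℕ → ℕ → MvPolynomial ℕ ℚ := fun i j => X (i + j + 1) * pderiv i (pderiv j f)
  set ψ : ℕ → ℕ → MvPolynomial ℕ ℚ := fun i j => ((i + 1) * (j + 1) * i : ℚ) • H i (j + 1)
  set χ : ℕ → ℕ → MvPolynomial ℕ ℚ := fun i j => ((i + 1) * (j + 1) * j : ℚ) • H (i + 1) j
  have termwise (i j : ℕ) :
      ((i + 1 : ℚ) * (j + 1)) • (X (i + j + 2 + 0) * pderiv (i + 1) (pderiv (j + 1) (lam1 f))) -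
        lam1 (((i + 1 : ℚ) * (j + 1)) • (X (i + j + 2 + 0) * pderiv (i + 1) (pderiv (j + 1) f))) =
      (-((i + 1) * (j + 1) * (i + j + 2)) : ℚ) • H (i + 1) (j + 1) + ψ i j + χ i j := by
    rw [Derivation.map_smul, ← smul_sub, mul_pderiv_pderiv_succ_lam1_sub, lam1_X]
    simp only [H, ψ, χ, add_zero]
    rw [show i + 1 + (j + 1) + 1 = i + j + 2 + 1 by ring,
      show i + 1 + j + 1 = i + j + 2 by ring, show i + (j + 1) + 1 = i + j + 2 by ring]
    push_cast
    simp only [Algebra.smul_def, map_add, map_mul, map_natCast, map_ofNat, map_neg, map_one]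
    ring
  have hH (i j : ℕ) (h : K ≤ i ∨ K ≤ j) : H i j = 0 := by
    rcases h with hi | hj
    · simp only [H, pderiv_pderiv_comm i, hf i (hK.trans hi), map_zero, mul_zero]
    · simp only [H, hf j (hK.trans hj), map_zero, mul_zero]
  calc secondOrderPart 0 K (lam1 f) - lam1 (secondOrderPart 0 K f)
      = ∑ i ∈ range K, ∑ j ∈ range K,
          ((-((i + 1) * (j + 1) * (i + j + 2)) : ℚ) • H (i + 1) (j + 1) + ψ i j + χ i j) := by
        simp only [secondOrderPart, map_sum, ← sum_sub_distrib, termwise]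
    _ = ∑ i ∈ range K, ∑ j ∈ range K,
          ((-((i + 1) * (j + 1) * (i + j + 2)) : ℚ) • H (i + 1) (j + 1) + ψ (i + 1) j +
            χ i (j + 1)) :=
        (sum_range_sum_range_add_shift
          (fun j => ⟨by simp [ψ], by simp [ψ, hH K (j + 1) (.inl le_rfl)]⟩)
          (fun i => ⟨by simp [χ], by simp [χ, hH (i + 1) K (.inr le_rfl)]⟩)).symm
    _ = (2 : ℚ) • secondOrderPart 1 K f := by
        simp only [secondOrderPart, smul_sum]
        refine sum_congr rfl fun i _ => sum_congr rfl fun j _ => ?_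
        simp only [H, ψ, χ, show i + 1 + (j + 1) + 1 = i + j + 2 + 1 by ring]
        push_cast
        module

end Commutators

/-- [M₀, Λ₁] = 2 M₁ as operators on ℚ[q₁, q₂, …]. -/
theorem commutator_M0_Lam1 :
    ∀ f : MvPolynomial ℕ ℚ, M 0 (Lam1 f) - Lam1 (M 0 f) = 2 • M 1 f := by
  intro f
  obtain ⟨n, hf⟩ := exists_forall_ge_pderiv_eq_zero f
  have h1 := commutator_firstOrderPart_lam1 hf (K := n + 1) (by omega)
  have h2 := commutator_secondOrderPart_lam1 hf (K := n + 1) (by omega)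
  rw [Lam1_eq_lam1, Lam1_eq_lam1,
    M_eq_of_pderiv_eq_zero (pderiv_lam1_eq_zero hf) (K := n + 1) (by omega),
    M_eq_of_pderiv_eq_zero hf (K := n + 1) (by omega),
    M_eq_of_pderiv_eq_zero hf (K := n + 1) (by omega),
    Derivation.map_smul, map_add, ← Nat.cast_smul_eq_nsmul ℚ]
  linear_combination (norm := module) (1 / 2 : ℚ) • h1 + (1 / 2 : ℚ) • h2
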